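/- Let X = ℝ with the almost proximity A δ̂ B iff int(A) ∩ int(B) ≠ ∅. Then the hit topology τ^- and the strongly hit topology (τ^∧)^- on CL(ℝ) are incomparable: neither is contained in the other. -/
import Mathlib


open Set TopologicalSpace

/-- The hyperspace of nonempty closed subsets of `X`. -/
def CL (X : Type*) [TopologicalSpace X] : Type _ :=
  {E : Set X // E.Nonempty ∧ IsClosed E}

/-- The almost proximity `A δ̂ B ↔ int A ∩ int B ≠ ∅`. -/
def sn {X : Type*} [TopologicalSpace X] (A B : Set X) : Prop :=
  (interior A ∩ interior B).Nonempty

/-- The hit topology `τ⁻` on `CL X`. -/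
def hitTopology (X : Type*) [TopologicalSpace X] : TopologicalSpace (CL X) :=
  generateFrom {S : Set (CL X) |
    ∃ V : Set X, IsOpen V ∧ S = {E : CL X | (E.1 ∩ V).Nonempty}}

/-- The strongly hit topology `(τ^∧)⁻` on `CL X`. -/
def strongHitTopology (X : Type*) [TopologicalSpace X] :
    TopologicalSpace (CL X) :=
  generateFrom {S : Set (CL X) | ∃ V : Set X, IsOpen V ∧ S = {E : CL X | sn E.1 V}}
lemma finite_interior_empty {F : Set ℝ} (hF : F.Finite) : interior F = ∅ :=
  interior_eq_empty_iff_dense_compl.mpr (hF.countable.dense_compl ℝ)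

/-- Any strongHit-generated open set containing an element with empty interior is `univ`. -/
lemma strongHit_univ {U : Set (CL ℝ)}
    (hU : GenerateOpen {S : Set (CL ℝ) | ∃ V : Set ℝ, IsOpen V ∧ S = {E : CL ℝ | sn E.1 V}} U) :
    ∀ E : CL ℝ, interior E.1 = ∅ → E ∈ U → U = univ := by
  induction hU with
  | basic S hS =>
    rintro E hE hEU
    obtain ⟨V, -, rfl⟩ := hS
    obtain ⟨x, hx, -⟩ := hEU
    simp [hE] at hx
  | univ => intro _ _ _; rfl
  | inter a b _ _ iha ihb =>
    rintro E hE ⟨hEa, hEb⟩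
    rw [iha E hE hEa, ihb E hE hEb, univ_inter]
  | sUnion S _ ih =>
    rintro E hE ⟨s, hs, hEs⟩
    have := ih s hs E hE hEs
    apply eq_univ_of_univ_subset
    rw [← this]
    exact subset_sUnion_of_mem hs

/-- Hit-generated open sets are upward closed and contain a finite subset of each member. -/
lemma hit_finite {U : Set (CL ℝ)}
    (hU : GenerateOpen {S : Set (CL ℝ) |
      ∃ V : Set ℝ, IsOpen V ∧ S = {E : CL ℝ | (E.1 ∩ V).Nonempty}} U) :
    (∀ E F : CL ℝ, E.1 ⊆ F.1 → E ∈ U → F ∈ U) ∧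
      (∀ E : CL ℝ, E ∈ U → ∃ F : CL ℝ, F.1 ⊆ E.1 ∧ F.1.Finite ∧ F ∈ U) := by
  induction hU with
  | basic S hS =>
    obtain ⟨V, -, rfl⟩ := hS
    constructor
    · rintro E F hEF ⟨x, hx1, hx2⟩
      exact ⟨x, hEF hx1, hx2⟩
    · rintro E ⟨x, hx1, hx2⟩
      exact ⟨⟨{x}, singleton_nonempty x, isClosed_singleton⟩,
        singleton_subset_iff.mpr hx1, finite_singleton x, x, rfl, hx2⟩
  | univ =>
    refine ⟨fun _ _ _ _ => trivial, fun E _ => ?_⟩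
    obtain ⟨x, hx⟩ := E.2.1
    exact ⟨⟨{x}, singleton_nonempty x, isClosed_singleton⟩,
      singleton_subset_iff.mpr hx, finite_singleton x, trivial⟩
  | inter a b _ _ iha ihb =>
    refine ⟨fun E F hEF hE => ⟨iha.1 E F hEF hE.1, ihb.1 E F hEF hE.2⟩, ?_⟩
    rintro E ⟨hEa, hEb⟩
    obtain ⟨F1, hF1sub, hF1fin, hF1a⟩ := iha.2 E hEa
    obtain ⟨F2, hF2sub, hF2fin, hF2b⟩ := ihb.2 E hEb
    refine ⟨⟨F1.1 ∪ F2.1, F1.2.1.mono subset_union_left, F1.2.2.union F2.2.2⟩,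
      union_subset hF1sub hF2sub, hF1fin.union hF2fin,
      iha.1 F1 _ subset_union_left hF1a, ihb.1 F2 _ subset_union_right hF2b⟩
  | sUnion S _ ih =>
    constructor
    · rintro E F hEF ⟨s, hs, hEs⟩
      exact ⟨s, hs, (ih s hs).1 E F hEF hEs⟩
    · rintro E ⟨s, hs, hEs⟩
      obtain ⟨F, h1, h2, h3⟩ := (ih s hs).2 E hEs
      exact ⟨F, h1, h2, s, hs, h3⟩
/-- On `ℝ` with the almost proximity
`A δ̂ B ↔ int A ∩ int B ≠ ∅`, the hit topology `τ⁻` and the strongly hit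
topology `(τ^∧)⁻` on `CL ℝ` are incomparable: neither is contained in the
other.  (Recall that in Mathlib's order on topologies, `t ≤ s` means every
`s`-open set is `t`-open; so `τ⁻ ⊆ (τ^∧)⁻` as collections of open sets reads
`strongHitTopology ℝ ≤ hitTopology ℝ`.) -/
theorem hit_and_strongHit_incomparable :
    ¬ (strongHitTopology ℝ ≤ hitTopology ℝ) ∧
    ¬ (hitTopology ℝ ≤ strongHitTopology ℝ) := by
  constructor
  · intro h
    -- the hit-open set V⁻ for V = Ioo 0 1 would be strongHit-open
    set U : Set (CL ℝ) := {E : CL ℝ | (E.1 ∩ Ioo (0:ℝ) 1).Nonempty} with hUdef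
    have hUhit : (hitTopology ℝ).IsOpen U :=
      TopologicalSpace.GenerateOpen.basic U ⟨Ioo 0 1, isOpen_Ioo, rfl⟩
    have hUs : GenerateOpen {S : Set (CL ℝ) | ∃ V : Set ℝ, IsOpen V ∧
        S = {E : CL ℝ | sn E.1 V}} U := (TopologicalSpace.le_def.mp h) U hUhit
    have hEU : (⟨{(1:ℝ)/2}, singleton_nonempty _, isClosed_singleton⟩ : CL ℝ) ∈ U := by
      refine ⟨1/2, rfl, by norm_num, by norm_num⟩
    have huniv := strongHit_univ hUs _ (finite_interior_empty (finite_singleton _)) hEU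
    have h2 : (⟨{(2:ℝ)}, singleton_nonempty _, isClosed_singleton⟩ : CL ℝ) ∈ U := by
      rw [huniv]; trivial
    obtain ⟨x, hx1, hx2, hx3⟩ := h2
    simp only [mem_singleton_iff] at hx1
    subst hx1; norm_num at hx3
  · intro h
    set W : Set (CL ℝ) := {E : CL ℝ | sn E.1 (Ioo (0:ℝ) 1)} with hWdef
    have hWs : (strongHitTopology ℝ).IsOpen W :=
      TopologicalSpace.GenerateOpen.basic W ⟨Ioo 0 1, isOpen_Ioo, rfl⟩
    have hWhit : GenerateOpen {S : Set (CL ℝ) | ∃ V : Set ℝ, IsOpen V ∧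
        S = {E : CL ℝ | (E.1 ∩ V).Nonempty}} W := (TopologicalSpace.le_def.mp h) W hWs
    have hEW : (⟨Icc (0:ℝ) 1, nonempty_Icc.mpr zero_le_one, isClosed_Icc⟩ : CL ℝ) ∈ W := by
      refine ⟨1/2, ?_, ?_⟩ <;>
        simp [interior_Icc, interior_Ioo] <;> norm_num
    obtain ⟨F, -, hFfin, hFW⟩ := (hit_finite hWhit).2 _ hEW
    obtain ⟨x, hx1, -⟩ := hFW
    rw [finite_interior_empty hFfin] at hx1
    exact hx1
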